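/- arXiv:2305.03442 — 6 statements merged into one kernel-verified Lean document; each statement's English description precedes it below -/
import Mathlib

section
/- Suppose k ≤ p^{mt} − p^{m(t−1)}. Then for any two polynomials f and g over F of degree at most k−1, if Tr(f(α)/α) = Tr(g(α)/α) for every α ∈ F∖{0}, then f(0) = g(0). In other words, the value f(0) is uniquely determined by the repair-trace codeword (Tr(f(α)/α))_{α∈F∖{0}}. -/
lemma key_nt (q t k i j : ℕ) (hq : 2 ≤ q) (ht : 1 ≤ t) (hkbd : k ≤ q^t - q^(t-1))
    (hi : i < t) (hj : j < k) :
    (q^t - 1) ∣ (j * q^i + (q^(t-1) - q^i)) ↔ (i = t - 1 ∧ j = 0) := by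
  have hit : i ≤ t - 1 := by omega
  have hqi : q ^ i ≤ q ^ (t-1) := Nat.pow_le_pow_right (by omega) hit
  have hqt1 : q ^ (t-1) < q ^ t := Nat.pow_lt_pow_right (by omega) (by omega)
  have hqtpos : 1 ≤ q ^ t := Nat.one_le_pow _ _ (by omega)
  constructor
  · intro hdvd
    zify [hqi, hqtpos] at hdvd
    have hqt : ((q:ℤ)^t : ℤ) ≡ 1 [ZMOD ((q:ℤ)^t - 1)] :=
      Int.modEq_iff_dvd.mpr (dvd_sub_comm.mp dvd_rfl)
    have h1 : (q:ℤ)^i * (q:ℤ)^(t-i) = (q:ℤ)^t := by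
      rw [← pow_add]; congr 1; omega
    have h2 : (q:ℤ)^(t-1) * (q:ℤ)^(t-i) = (q:ℤ)^(t-1-i) * (q:ℤ)^t := by
      rw [← pow_add, ← pow_add]; congr 1; omega
    have e1 : ((j:ℤ) * q^i + ((q:ℤ)^(t-1) - q^i)) * (q:ℤ)^(t-i)
        = (j:ℤ)*(q:ℤ)^t + (q:ℤ)^(t-1-i)*(q:ℤ)^t - (q:ℤ)^t := by
      calc ((j:ℤ) * q^i + ((q:ℤ)^(t-1) - q^i)) * (q:ℤ)^(t-i)
          = (j:ℤ)*((q:ℤ)^i*(q:ℤ)^(t-i)) + (q:ℤ)^(t-1)*(q:ℤ)^(t-i)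
            - (q:ℤ)^i*(q:ℤ)^(t-i) := by ring
        _ = _ := by rw [h1, h2]
    have hmod : (j:ℤ)*(q:ℤ)^t + (q:ℤ)^(t-1-i)*(q:ℤ)^t - (q:ℤ)^t
        ≡ (j:ℤ)*1 + (q:ℤ)^(t-1-i)*1 - 1 [ZMOD ((q:ℤ)^t - 1)] :=
      (((Int.ModEq.refl _).mul hqt).add ((Int.ModEq.refl _).mul hqt)).sub hqt
    have hdvd2 : ((q:ℤ)^t - 1) ∣ (j:ℤ) + ((q:ℤ)^(t-1-i) - 1) := by
      have h0 := (Int.modEq_zero_iff_dvd.mpr hdvd).mul_right ((q:ℤ)^(t-i))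
      rw [e1, zero_mul] at h0
      have h3 := Int.modEq_zero_iff_dvd.mp (hmod.symm.trans h0)
      convert h3 using 1; ring
    have hone : (1:ℤ) ≤ (q:ℤ)^(t-1-i) := one_le_pow₀ (by exact_mod_cast by omega)
    have hble : (q:ℤ)^(t-1-i) ≤ (q:ℤ)^(t-1) :=
      pow_le_pow_right₀ (by exact_mod_cast by omega) (by omega)
    have hkz : (k:ℤ) ≤ (q:ℤ)^t - (q:ℤ)^(t-1) := by
      zify [le_of_lt hqt1] at hkbd; exact hkbd
    have hjz : (j:ℤ) < k := by exact_mod_cast hj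
    have ha0 : (j:ℤ) + ((q:ℤ)^(t-1-i) - 1) = 0 := by
      rcases eq_or_lt_of_le (show (0:ℤ) ≤ (j:ℤ) + ((q:ℤ)^(t-1-i) - 1) by omega) with h | h
      · omega
      · exfalso
        have := Int.le_of_dvd h hdvd2
        omega
    have hj0 : j = 0 := by omega
    have hpow1 : (q:ℤ)^(t-1-i) = 1 := by omega
    have hti : t - 1 - i = 0 := by
      by_contra hne
      have : (q:ℤ) ≤ (q:ℤ)^(t-1-i) := le_self_pow₀ (by exact_mod_cast by omega) hne
      have : (2:ℤ) ≤ (q:ℤ) := by exact_mod_cast hq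
      omega
    exact ⟨by omega, hj0⟩
  · rintro ⟨rfl, rfl⟩
    simp

/-- If `k ≤ p^{mt} − p^{m(t−1)}`, then for any two polynomials `f, g` over `F`
of degree at most `k − 1`, if `Tr(f(α)/α) = Tr(g(α)/α)` for every nonzero `α`, then
`f(0) = g(0)`. -/
theorem stmt_0 (p m t k : ℕ) (hp : p.Prime) (hm : 1 ≤ m) (ht : 1 ≤ t) (hk : 1 ≤ k)
    (B F : Type) [Field B] [Field F] [Fintype B] [Fintype F] [Algebra B F]
    (hcardB : Fintype.card B = p ^ m) (hcardF : Fintype.card F = p ^ (m * t))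
    (Tr : F → B)
    (hTr : ∀ x : F, algebraMap B F (Tr x) = ∑ i ∈ Finset.range t, x ^ p ^ (m * i))
    (hkbd : k ≤ p ^ (m * t) - p ^ (m * (t - 1)))
    (f g : Polynomial F)
    (hf : f.degree ≤ ((k - 1 : ℕ) : WithBot ℕ))
    (hg : g.degree ≤ ((k - 1 : ℕ) : WithBot ℕ))
    (heq : ∀ α : F, α ≠ 0 → Tr (f.eval α / α) = Tr (g.eval α / α)) :
    f.eval 0 = g.eval 0 := by
  classical
  haveI : Fact p.Prime := ⟨hp⟩
  set q := p ^ m with hqdef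
  have hq2 : 2 ≤ q := le_trans hp.two_le (Nat.le_self_pow (by omega) p)
  have hcardF' : Fintype.card F = q ^ t := by rw [hcardF, pow_mul]
  have hpm : ∀ i : ℕ, p ^ (m * i) = q ^ i := fun i => pow_mul p m i
  -- characteristic
  haveI hcharF : CharP F p := by
    obtain ⟨n, hr, h⟩ := FiniteField.card F (ringChar F)
    have hrp : ringChar F = p := by
      have hdvd : ringChar F ∣ p ^ (m * t) := by
        rw [← hcardF, h]; exact dvd_pow_self _ (by exact_mod_cast n.ne_zero)
      exact (Nat.prime_dvd_prime_iff_eq hr hp).mp (hr.dvd_of_dvd_pow hdvd)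
    exact hrp ▸ ringChar.charP F
  haveI : ExpChar F p := .prime hp
  -- difference polynomial
  set h : Polynomial F := f - g with hhdef
  have hhdeg : h.natDegree < k := by
    have h1 : h.degree ≤ ((k-1:ℕ) : WithBot ℕ) :=
      le_trans (Polynomial.degree_sub_le f g) (max_le hf hg)
    have h2 := Polynomial.natDegree_le_iff_degree_le.mpr h1
    omega
  have hT0 : ∀ α : F, α ≠ 0 →
      ∑ i ∈ Finset.range t, (h.eval α / α) ^ p ^ (m*i) = 0 := by
    intro α hα
    have h1 := congrArg (algebraMap B F) (heq α hα)
    rw [hTr, hTr] at h1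
    have h2 : ∀ i ∈ Finset.range t, (h.eval α / α)^p^(m*i)
        = (f.eval α / α)^p^(m*i) - (g.eval α / α)^p^(m*i) := by
      intro i _
      rw [show h.eval α / α = f.eval α / α - g.eval α / α by
        rw [hhdef, Polynomial.eval_sub, sub_div], sub_pow_char_pow]
    rw [Finset.sum_congr rfl h2, Finset.sum_sub_distrib, h1, sub_self]
  -- the big sum
  have hS : (0 : F) = ∑ x : Fˣ, (x:F)^(q^(t-1)) *
      ∑ i ∈ Finset.range t, (h.eval (x:F) / (x:F))^(p^(m*i)) := by
    symm
    apply Finset.sum_eq_zero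
    intro x _
    rw [hT0 (x:F) (Units.ne_zero x), mul_zero]
  have step : ∀ x : Fˣ, (x:F)^(q^(t-1)) *
        ∑ i ∈ Finset.range t, (h.eval (x:F) / (x:F))^(p^(m*i))
      = ∑ i ∈ Finset.range t, ∑ j ∈ Finset.range k,
          (h.coeff j)^(q^i) * (x:F)^(j*q^i + (q^(t-1)-q^i)) := by
    intro x
    rw [Finset.mul_sum]
    apply Finset.sum_congr rfl
    intro i hi
    have hi' : i < t := Finset.mem_range.mp hi
    have hiq : q^i ≤ q^(t-1) := Nat.pow_le_pow_right (by omega) (by omega)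
    have hx : (x:F) ≠ 0 := Units.ne_zero x
    have e1 : (x:F)^(q^(t-1)) * (h.eval (x:F) / (x:F))^(p^(m*i))
        = (h.eval (x:F))^(q^i) * (x:F)^(q^(t-1)-q^i) := by
      rw [div_pow, hpm i, pow_sub₀ _ hx hiq]
      field_simp
    rw [e1, Polynomial.eval_eq_sum_range' hhdeg, ← hpm i, sum_pow_char_pow,
      Finset.sum_mul]
    apply Finset.sum_congr rfl
    intro j hj
    rw [hpm i, mul_pow, ← pow_mul, ← pow_mul]
    rw [mul_assoc, ← pow_add]
  have hS2 : (0:F) = ∑ i ∈ Finset.range t, ∑ j ∈ Finset.range k,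
      (h.coeff j)^(q^i) * ∑ x : Fˣ, (x:F)^(j*q^i + (q^(t-1)-q^i)) := by
    rw [hS, Finset.sum_congr rfl (fun x _ => step x), Finset.sum_comm]
    apply Finset.sum_congr rfl
    intro i _
    rw [Finset.sum_comm]
    apply Finset.sum_congr rfl
    intro j _
    rw [← Finset.mul_sum]
  -- evaluate inner sums
  have hkbd' : k ≤ q^t - q^(t-1) := by rwa [hpm t, hpm (t-1)] at hkbd
  have hsum : ∀ i ∈ Finset.range t, ∀ j ∈ Finset.range k,
      (∑ x : Fˣ, (x:F)^(j*q^i + (q^(t-1)-q^i)))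
        = if i = t-1 ∧ j = 0 then -1 else 0 := by
    intro i hi j hj
    rw [show (∑ x : Fˣ, (x:F)^(j*q^i + (q^(t-1)-q^i)))
        = ∑ x : Fˣ, ((x:F)^(j*q^i + (q^(t-1)-q^i)) : F) from rfl]
    rw [FiniteField.sum_pow_units F _]
    rw [hcardF']
    congr 1
    simp only [eq_iff_iff]
    exact key_nt q t k i j hq2 ht hkbd' (Finset.mem_range.mp hi) (Finset.mem_range.mp hj)
  have hS3 : (0:F) = -(h.coeff 0)^(q^(t-1)) := by
    rw [hS2]
    rw [Finset.sum_congr rfl (fun i hi => Finset.sum_congr rfl (fun j hj => by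
      rw [hsum i hi j hj]))]
    rw [Finset.sum_eq_single (t-1)]
    · rw [Finset.sum_eq_single 0]
      · simp
      · intro j _ hj0; simp [hj0]
      · intro habs; exact absurd (Finset.mem_range.mpr (by omega)) habs
    · intro i _ hi0
      apply Finset.sum_eq_zero
      intro j _
      simp [hi0]
    · intro habs; exact absurd (Finset.mem_range.mpr (by omega)) habs
  have hc0 : h.coeff 0 = 0 := by
    have := hS3.symm
    rw [neg_eq_zero] at this
    exact pow_eq_zero_iff (a := h.coeff 0) (pow_ne_zero _ (by omega)) |>.mp this
  have : h.eval 0 = 0 := by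
    rw [← Polynomial.coeff_zero_eq_eval_zero]; exact hc0
  rw [hhdef, Polynomial.eval_sub] at this
  exact sub_eq_zero.mp this
end

section
/- Suppose k ≤ p^{mt} − p^{m(t−1)} and let f be a polynomial over F of degree at most k−1. Then for every u ∈ F the following identity holds in B: Tr(u·f(0)) + Σ_{α∈F∖{0}} Tr(u·α)·Tr(f(α)/α) = 0. -/
/-!
Once `Tr` is identified with `Algebra.trace B F`, the left side is the trace of
`u f(0) + ∑_{α ≠ 0} Tr(uα) f(α)/α`, by `B`-linearity. Expanding `Tr(uα) = ∑_{i<t} (uα)^{q^i}`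
with `q = |B|` turns the sum into `∑_i u^{q^i} ∑_{α ≠ 0} α^{q^i - 1} f(α)`. The degree bound keeps
every exponent of `α` below `q^t - 1`, where power sums over `F` vanish, so each inner sum equals
minus the constant term of `X^{q^i - 1} f`: that is `-f(0)` for `i = 0` and `0` otherwise.
-/
open Polynomial Finset

namespace FiniteField

variable {K : Type*} [Field K] [Fintype K]

theorem sum_eval_eq_zero_of_natDegree_lt {g : K[X]} (hg : g.natDegree < Fintype.card K - 1) :
    ∑ x : K, g.eval x = 0 := by
  simp_rw [eval_eq_sum_range' hg]
  rw [sum_comm]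
  exact sum_eq_zero fun d hd => by
    rw [← mul_sum, sum_pow_lt_card_sub_one K d (mem_range.mp hd), mul_zero]

variable [DecidableEq K]

theorem sum_univ_sdiff_zero_eval {g : K[X]} (hg : g.natDegree < Fintype.card K - 1) :
    ∑ x ∈ univ \ {0}, g.eval x = -g.eval 0 := by
  rw [eq_neg_iff_add_eq_zero, ← sum_singleton (fun x => g.eval x) 0,
    sum_sdiff (subset_univ _), sum_eval_eq_zero_of_natDegree_lt hg]

theorem sum_univ_sdiff_zero_pow_mul_eval {f : K[X]} {n : ℕ}
    (h : n + f.natDegree < Fintype.card K - 1) :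
    ∑ x ∈ univ \ {0}, x ^ n * f.eval x = -(0 ^ n * f.eval 0) := by
  have hdeg : (X ^ n * f).natDegree < Fintype.card K - 1 :=
    (natDegree_mul_le.trans (by rw [natDegree_X_pow])).trans_lt h
  simpa using sum_univ_sdiff_zero_eval hdeg

theorem sum_sum_pow_mul_eval_div {q t : ℕ} (hq : 1 < q) (ht : 0 < t) (u : K) {f : K[X]}
    (hf : f.natDegree + q ^ (t - 1) < Fintype.card K) :
    ∑ x ∈ univ \ {0}, (∑ i ∈ range t, (u * x) ^ q ^ i) * (f.eval x / x) = -(u * f.eval 0) := by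
  have hsplit : ∀ x ∈ univ \ {(0 : K)}, (∑ i ∈ range t, (u * x) ^ q ^ i) * (f.eval x / x) =
      ∑ i ∈ range t, u ^ q ^ i * (x ^ (q ^ i - 1) * f.eval x) := by
    intro x hx
    have hx0 : x ≠ 0 := by simpa using hx
    rw [sum_mul]
    refine sum_congr rfl fun i _ => ?_
    rw [mul_pow, ← pow_sub_one_mul (pow_pos (by omega) i).ne' x]
    field_simp
  have hinner : ∀ i ∈ range t, u ^ q ^ i * ∑ x ∈ univ \ {(0 : K)}, x ^ (q ^ i - 1) * f.eval x =
      if i = 0 then -(u * f.eval 0) else 0 := by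
    intro i hi
    have hqi : q ^ i ≤ q ^ (t - 1) :=
      Nat.pow_le_pow_right (by omega) (by have := mem_range.mp hi; omega)
    have hpos : 0 < q ^ i := pow_pos (by omega) i
    rw [sum_univ_sdiff_zero_pow_mul_eval (by omega)]
    split_ifs with hi0
    · simp [hi0]
    · rw [zero_pow (by have := Nat.one_lt_pow hi0 hq; omega)]
      simp
  rw [sum_congr rfl hsplit, sum_comm, ← sum_congr rfl fun i _ => mul_sum .., sum_congr rfl hinner,
    sum_ite_eq' _ _ _, if_pos (mem_range.mpr ht)]

theorem trace_mul_eval_zero_add_sum_trace_mul_trace_eval_div (B : Type*) {F : Type*} [Field B]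
    [Field F] [Fintype B] [Fintype F] [DecidableEq F] [Algebra B F] (u : F) {f : F[X]}
    (hf : f.natDegree + Fintype.card B ^ (Module.finrank B F - 1) < Fintype.card F) :
    Algebra.trace B F (u * f.eval 0) +
      ∑ x ∈ univ \ {0}, Algebra.trace B F (u * x) * Algebra.trace B F (f.eval x / x) = 0 := by
  have hsum := sum_sum_pow_mul_eval_div Fintype.one_lt_card Module.finrank_pos u hf
  simp_rw [← Nat.card_eq_fintype_card (α := B), ← algebraMap_trace_eq_sum_pow, ← Algebra.smul_def]
    at hsum
  simp_rw [← smul_eq_mul (a := Algebra.trace B F (u * _)), ← LinearMap.map_smul, ← map_sum,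
    ← map_add, hsum, add_neg_cancel, map_zero]

end FiniteField

theorem stmt_1_general (p m t k : ℕ)
    (B F : Type) [Field B] [Field F] [Fintype B] [Fintype F] [Algebra B F]
    [DecidableEq F]
    (hcardB : Fintype.card B = p ^ m) (hcardF : Fintype.card F = p ^ (m * t))
    (Tr : F → B)
    (hTr : ∀ x : F, algebraMap B F (Tr x) = ∑ i ∈ Finset.range t, x ^ p ^ (m * i))
    (hkbd : k ≤ p ^ (m * t) - p ^ (m * (t - 1)))
    (f : Polynomial F)
    (hf : f.degree ≤ ((k - 1 : ℕ) : WithBot ℕ)) :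
    ∀ u : F,
      Tr (u * f.eval 0) +
        ∑ α ∈ Finset.univ \ {0}, Tr (u * α) * Tr (f.eval α / α) = 0 := by
  simp_rw [pow_mul, ← hcardB] at hcardF hTr hkbd
  have hq := Fintype.one_lt_card (α := B)
  have hfinrank : Module.finrank B F = t :=
    Nat.pow_right_injective hq (Module.card_eq_pow_finrank.symm.trans hcardF)
  have hTr_eq : Tr = Algebra.trace B F := funext fun x => (algebraMap B F).injective <| by
    rw [hTr, FiniteField.algebraMap_trace_eq_sum_pow, hfinrank, Nat.card_eq_fintype_card]
  have hdeg : f.natDegree + Fintype.card B ^ (Module.finrank B F - 1) < Fintype.card F := by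
    have := natDegree_le_of_degree_le hf
    have := Nat.pow_lt_pow_right hq (Nat.sub_one_lt_of_lt (Module.finrank_pos (R := B) (M := F)))
    rw [hfinrank] at this ⊢
    omega
  subst hTr_eq
  exact fun u => FiniteField.trace_mul_eval_zero_add_sum_trace_mul_trace_eval_div B u hdeg

/-- Trace-repair parity check of the Guruswami–Wootters scheme:
if `k ≤ p^{mt} − p^{m(t−1)}` and `deg f ≤ k − 1`, then for every `u ∈ F`,
`Tr(u·f(0)) + Σ_{α ≠ 0} Tr(u·α)·Tr(f(α)/α) = 0` in `B`. -/
theorem stmt_1 (p m t k : ℕ) (hp : p.Prime) (hm : 1 ≤ m) (ht : 1 ≤ t) (hk : 1 ≤ k)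
    (B F : Type) [Field B] [Field F] [Fintype B] [Fintype F] [Algebra B F]
    [DecidableEq F]
    (hcardB : Fintype.card B = p ^ m) (hcardF : Fintype.card F = p ^ (m * t))
    (Tr : F → B)
    (hTr : ∀ x : F, algebraMap B F (Tr x) = ∑ i ∈ Finset.range t, x ^ p ^ (m * i))
    (hkbd : k ≤ p ^ (m * t) - p ^ (m * (t - 1)))
    (f : Polynomial F)
    (hf : f.degree ≤ ((k - 1 : ℕ) : WithBot ℕ)) :
    ∀ u : F,
      Tr (u * f.eval 0) +
        ∑ α ∈ Finset.univ \ {0}, Tr (u * α) * Tr (f.eval α / α) = 0 :=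
  stmt_1_general p m t k B F hcardB hcardF Tr hTr hkbd f hf
end

section
/- (Degree bound.) Define Δ = (k−1)·p^{m(t−1)} if k ≥ 2, and Δ = p^{m(t−1)} − 1 if k = 1. Suppose k ≤ p^m. Then for every polynomial f over F of degree at most k−1, if the word (Tr(f(α)/α))_{α∈F∖{0}} is not identically zero, then it has at least p^{mt} − 1 − Δ nonzero coordinates. Consequently, the minimum distance of the repair-trace code T(A,k) is at least p^{mt} − 1 − Δ. -/
/-- Degree bound: with `Δ = (k−1)·p^{m(t−1)}` if `k ≥ 2` and
`Δ = p^{m(t−1)} − 1` if `k = 1`, and assuming `k ≤ p^m`, every not-identically-zero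
repair-trace word `(Tr(f(α)/α))_{α ≠ 0}` has at least `p^{mt} − 1 − Δ` nonzero
coordinates; hence the minimum distance of `T(A,k)` is at least `p^{mt} − 1 − Δ`. -/
theorem stmt_2 (p m t k Δ : ℕ) (hp : p.Prime) (hm : 1 ≤ m) (ht : 1 ≤ t) (hk : 1 ≤ k)
    (hΔ : Δ = if 2 ≤ k then (k - 1) * p ^ (m * (t - 1)) else p ^ (m * (t - 1)) - 1)
    (hksmall : k ≤ p ^ m)
    (B F : Type) [Field B] [Field F] [Fintype B] [Fintype F] [Algebra B F]
    (hcardB : Fintype.card B = p ^ m) (hcardF : Fintype.card F = p ^ (m * t))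
    (Tr : F → B)
    (hTr : ∀ x : F, algebraMap B F (Tr x) = ∑ i ∈ Finset.range t, x ^ p ^ (m * i))
    (f : Polynomial F)
    (hf : f.degree ≤ ((k - 1 : ℕ) : WithBot ℕ))
    (hnz : ∃ α : F, α ≠ 0 ∧ Tr (f.eval α / α) ≠ 0) :
    p ^ (m * t) - 1 - Δ ≤ {α : F | α ≠ 0 ∧ Tr (f.eval α / α) ≠ 0}.ncard := by
  classical
  set q : ℕ := p ^ m with hq
  have hq1 : 1 < q := Nat.one_lt_pow (by omega) hp.one_lt
  set Q : ℕ := q ^ (t - 1) with hQ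
  have hΔ' : Δ = if 2 ≤ k then (k - 1) * Q else Q - 1 := by
    rw [hΔ, hQ, hq, pow_mul]
  -- the auxiliary polynomial
  set P : Polynomial F :=
    ∑ i ∈ Finset.range t, f ^ (q ^ i) * Polynomial.X ^ (Q - q ^ i) with hP
  have hle : ∀ i ∈ Finset.range t, q ^ i ≤ Q := by
    intro i hi
    exact Nat.pow_le_pow_right (by omega) (by simp at hi; omega)
  -- evaluation of P
  have heval : ∀ α : F, α ≠ 0 →
      P.eval α = α ^ Q * ∑ i ∈ Finset.range t, (f.eval α / α) ^ q ^ i := by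
    intro α hα
    rw [hP, Polynomial.eval_finset_sum, Finset.mul_sum]
    refine Finset.sum_congr rfl fun i hi => ?_
    rw [Polynomial.eval_mul, Polynomial.eval_pow, Polynomial.eval_pow, Polynomial.eval_X,
      div_pow, pow_sub₀ α hα (hle i hi)]
    field_simp
  -- trace vanishing criterion
  have htr0 : ∀ x : F, (Tr x = 0 ↔ ∑ i ∈ Finset.range t, x ^ q ^ i = 0) := by
    intro x
    have h1 : (∑ i ∈ Finset.range t, x ^ q ^ i)
        = ∑ i ∈ Finset.range t, x ^ p ^ (m * i) :=
      Finset.sum_congr rfl fun i _ => by rw [hq, ← pow_mul]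
    rw [h1, ← hTr, map_eq_zero]
  have hequiv : ∀ α : F, α ≠ 0 → (Tr (f.eval α / α) = 0 ↔ P.eval α = 0) := by
    intro α hα
    rw [heval α hα, mul_eq_zero, htr0]
    have : α ^ Q ≠ 0 := pow_ne_zero _ hα
    tauto
  -- P is nonzero
  obtain ⟨α₀, hα₀, hTrne⟩ := hnz
  have hPne : P ≠ 0 := by
    intro h
    exact hTrne ((hequiv α₀ hα₀).mpr (by rw [h, Polynomial.eval_zero]))
  -- degree bound
  have hfdeg : f.natDegree ≤ k - 1 := Polynomial.natDegree_le_iff_degree_le.mpr hf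
  have hPdeg : P.natDegree ≤ Δ := by
    rw [hP]
    apply Polynomial.natDegree_sum_le_of_forall_le
    intro i hi
    have ha : q ^ i ≤ Q := hle i hi
    have ha1 : 1 ≤ q ^ i := Nat.one_le_pow _ _ (by omega)
    have h1 : (f ^ q ^ i * Polynomial.X ^ (Q - q ^ i)).natDegree
        ≤ q ^ i * (k - 1) + (Q - q ^ i) := by
      refine le_trans (Polynomial.natDegree_mul_le) ?_
      have h2 : (f ^ q ^ i).natDegree ≤ q ^ i * (k - 1) :=
        le_trans (Polynomial.natDegree_pow_le) (Nat.mul_le_mul_left _ hfdeg)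
      have h3 : ((Polynomial.X : Polynomial F) ^ (Q - q ^ i)).natDegree ≤ Q - q ^ i := by
        simp [Polynomial.natDegree_X_pow]
      omega
    refine h1.trans ?_
    rw [hΔ']
    by_cases h2k : 2 ≤ k
    · rw [if_pos h2k]
      set a := q ^ i
      calc a * (k - 1) + (Q - a)
          = a * (k - 2) + a + (Q - a) := by
            rw [show k - 1 = (k - 2) + 1 by omega, Nat.mul_add, Nat.mul_one]
        _ = a * (k - 2) + Q := by rw [Nat.add_assoc, Nat.add_sub_cancel' ha]
        _ ≤ Q * (k - 2) + Q := Nat.add_le_add_right (Nat.mul_le_mul_right _ ha) Q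
        _ = (k - 1) * Q := by
            rw [show k - 1 = (k - 2) + 1 by omega]; ring
    · rw [if_neg h2k]
      have hk1 : k = 1 := by omega
      subst hk1
      simp only [Nat.sub_self, Nat.mul_zero, Nat.zero_add]
      omega
  -- counting
  set S : Finset F := Finset.univ.filter
    (fun α : F => α ≠ 0 ∧ Tr (f.eval α / α) ≠ 0) with hS
  set Z : Finset F := Finset.univ.filter
    (fun α : F => α ≠ 0 ∧ Tr (f.eval α / α) = 0) with hZ
  have hset : {α : F | α ≠ 0 ∧ Tr (f.eval α / α) ≠ 0}.ncard = S.card := by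
    rw [← Set.ncard_coe_finset]
    congr 1
    ext α
    simp [hS]
  have hZcard : Z.card ≤ Δ := by
    have hsub : Z ⊆ P.roots.toFinset := by
      intro α hα
      rw [hZ, Finset.mem_filter] at hα
      rw [Multiset.mem_toFinset, Polynomial.mem_roots hPne]
      exact (hequiv α hα.2.1).mp hα.2.2
    calc Z.card ≤ P.roots.toFinset.card := Finset.card_le_card hsub
      _ ≤ Multiset.card P.roots := Multiset.toFinset_card_le _
      _ ≤ P.natDegree := Polynomial.card_roots' P
      _ ≤ Δ := hPdeg
  have hN : (Finset.univ.filter (fun α : F => α ≠ 0)).card = p ^ (m * t) - 1 := by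
    rw [Finset.filter_ne', Finset.card_erase_of_mem (Finset.mem_univ 0),
      Finset.card_univ, hcardF]
  have hdisj : Disjoint S Z := by
    rw [Finset.disjoint_left]
    intro α hαS hαZ
    rw [hS, Finset.mem_filter] at hαS
    rw [hZ, Finset.mem_filter] at hαZ
    exact hαS.2.2 hαZ.2.2
  have hunion : S ∪ Z = Finset.univ.filter (fun α : F => α ≠ 0) := by
    ext α
    simp only [hS, hZ, Finset.mem_union, Finset.mem_filter, Finset.mem_univ, true_and]
    tauto
  have hkey : S.card + Z.card = p ^ (m * t) - 1 := by
    rw [← Finset.card_union_of_disjoint hdisj, hunion, hN]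
  rw [hset]
  have hcardpos : 1 ≤ p ^ (m * t) := Nat.one_le_pow _ _ hp.pos
  omega
end

section
/- (Lifted decoding bound.) Suppose k ≤ p^{mt} − p^{m(t−1)}. Then for every polynomial f over F of degree at most k−1, if the word (Tr(f(α)/α))_{α∈F∖{0}} is not identically zero, then it has at least ⌊(p^{mt} − k)/p^{m(t−1)}⌋ nonzero coordinates. Consequently, the minimum distance of the repair-trace code T(A,k) is at least ⌊(p^{mt} − k)/p^{m(t−1)}⌋. -/
/-!
Write `Y(α) = Tr(f(α)/α)`, viewed in `F`, `q = p^{mt}` and `Q = p^{m(t-1)}`. Expanding the trace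
as a sum of Frobenius powers `x ↦ x^{p^{mi}}`, the product `Y(α) α^{sQ}` is a combination of
monomials `α^e` whose exponents are positive and not divisible by `q - 1` as long as `2 ≤ s` and
`sQ + k ≤ q`. Hence the moments `∑_α Y(α) α^{sQ}` vanish for `2 ≤ s ≤ ⌊(q - k)/Q⌋`. If the
support `T` of `Y` had fewer than `⌊(q - k)/Q⌋` points, the weights `Y(β) β^{2Q}` would satisfy
`#T` consecutive moment equations in the distinct nodes `β^Q`, so by Vandermonde they would all
vanish.
-/

open Polynomial Finset

theorem Finset.eq_zero_of_forall_sum_mul_pow_eq_zero {ι K : Type*} [Field K] [DecidableEq ι]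
    {s : Finset ι} {w v : ι → K} (hv : Set.InjOn v s)
    (h : ∀ j < #s, ∑ i ∈ s, w i * v i ^ j = 0) {i : ι} (hi : i ∈ s) : w i = 0 := by
  set L := Lagrange.basis s v i
  have hdeg : L.natDegree < #s := by
    have := card_pos.mpr ⟨i, hi⟩
    rw [Lagrange.natDegree_basis hv hi]
    omega
  calc w i = ∑ j ∈ s, w j * L.eval (v j) := by
        rw [sum_eq_single_of_mem i hi fun j hj hji => by
          rw [Lagrange.eval_basis_of_ne hji.symm hj, mul_zero], Lagrange.eval_basis_self hv hi,
          mul_one]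
    _ = ∑ n ∈ range #s, L.coeff n * ∑ j ∈ s, w j * v j ^ n := by
        simp_rw [eval_eq_sum_range' hdeg, mul_sum]
        rw [sum_comm]
        exact sum_congr rfl fun n _ => sum_congr rfl fun j _ => by ring
    _ = 0 := sum_eq_zero fun n hn => by rw [h n (mem_range.mp hn), mul_zero]

theorem Finset.lt_card_filter_ne_zero_of_forall_sum_mul_pow_eq_zero {ι K : Type*} [Field K]
    [DecidableEq ι] [DecidableEq K] {u : Finset ι} {w v : ι → K} {n : ℕ} (hv : Set.InjOn v u)
    (h : ∀ j < n, ∑ i ∈ u, w i * v i ^ j = 0) (hw : ∃ i ∈ u, w i ≠ 0) :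
    n < #(u.filter (w · ≠ 0)) := by
  by_contra! hn
  obtain ⟨i, hiu, hi⟩ := hw
  have hsum (j : ℕ) : ∑ i ∈ u.filter (w · ≠ 0), w i * v i ^ j = ∑ i ∈ u, w i * v i ^ j :=
    sum_filter_of_ne fun i _ hi => left_ne_zero_of_mul hi
  exact hi (eq_zero_of_forall_sum_mul_pow_eq_zero (hv.mono (filter_subset _ u))
    (fun j hj => (hsum j).trans (h j (by omega))) (mem_filter.mpr ⟨hiu, hi⟩))

theorem FiniteField.sum_pow_eq_zero_of_not_dvd {K : Type*} [Field K] [Fintype K] {e : ℕ}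
    (he : e ≠ 0) (hdvd : ¬ Fintype.card K - 1 ∣ e) : ∑ x : K, x ^ e = 0 := by
  have hq : 0 < Fintype.card K - 1 := by
    have := Fintype.one_lt_card (α := K)
    omega
  have hr : e % (Fintype.card K - 1) ≠ 0 := fun h => hdvd (Nat.dvd_of_mod_eq_zero h)
  calc ∑ x : K, x ^ e = ∑ x : K, x ^ (e % (Fintype.card K - 1)) := sum_congr rfl fun x _ => by
        rcases eq_or_ne x 0 with rfl | hx
        · rw [zero_pow he, zero_pow hr]
        · conv_lhs => rw [← Nat.mod_add_div e (Fintype.card K - 1), pow_add, pow_mul,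
            FiniteField.pow_card_sub_one_eq_one x hx, one_pow, mul_one]
    _ = 0 := FiniteField.sum_pow_lt_card_sub_one _ _ (Nat.mod_lt _ hq)

/-- Multiplying the exponent by `p ^ (n - a)` turns it into `p ^ n * M ≡ M [MOD p ^ n - 1]` with
`M = d + s * p ^ (b - a) - 1`, and `0 < M < p ^ n - 1`. -/
theorem not_pow_sub_one_dvd_mul_pow_add_sub {p a b n d s : ℕ} (hp : 0 < p) (hab : a ≤ b)
    (hbn : b ≤ n) (hs : 2 ≤ s) (hle : d + 1 + s * p ^ b ≤ p ^ n) :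
    ¬ p ^ n - 1 ∣ d * p ^ a + (s * p ^ b - p ^ a) := by
  intro hdvd
  have hpa : p ^ a ≤ p ^ b := Nat.pow_le_pow_right hp hab
  have hpba : 1 ≤ p ^ (b - a) := Nat.one_le_pow _ _ hp
  have hpba' : p ^ (b - a) ≤ p ^ b := Nat.pow_le_pow_right hp (Nat.sub_le b a)
  have hsba : s * p ^ (b - a) ≤ s * p ^ b := Nat.mul_le_mul_left s hpba'
  have ha : p ^ a * p ^ (n - a) = p ^ n := by
    rw [← pow_add, Nat.add_sub_cancel' (hab.trans hbn)]
  have hb : p ^ b * p ^ (n - a) = p ^ n * p ^ (b - a) := by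
    rw [← pow_add, ← pow_add]
    congr 1
    omega
  have h2 : 2 ≤ s * p ^ (b - a) := le_trans hs (Nat.le_mul_of_pos_right s hpba)
  obtain ⟨M, hMdef⟩ : ∃ M, M + 1 = d + s * p ^ (b - a) := ⟨_, Nat.sub_add_cancel (by omega)⟩
  have hM : (d * p ^ a + (s * p ^ b - p ^ a)) * p ^ (n - a) = M + (p ^ n - 1) * M := by
    have hsa : p ^ a ≤ s * p ^ b := hpa.trans (Nat.le_mul_of_pos_left _ (by omega))
    have hn : 1 ≤ p ^ n := Nat.one_le_pow _ _ hp
    zify [hsa, hn] at ha hb hMdef ⊢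
    linear_combination ((d : ℤ) - 1) * ha + (s : ℤ) * hb - (p : ℤ) ^ n * hMdef
  have hMdvd : p ^ n - 1 ∣ M :=
    (Nat.dvd_add_left (dvd_mul_right _ _)).mp (hM ▸ dvd_mul_of_dvd_left hdvd _)
  have := Nat.le_of_dvd (by omega) hMdvd
  omega

theorem div_pow_mul_pow_of_lt {K : Type*} [Field K] (x α : K) {N E : ℕ} (h : N < E) :
    (x / α) ^ N * α ^ E = x ^ N * α ^ (E - N) := by
  rcases eq_or_ne α 0 with rfl | hα
  · rw [zero_pow (by omega), zero_pow (by omega), mul_zero, mul_zero]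
  · rw [div_pow, div_mul_eq_mul_div, div_eq_iff (pow_ne_zero _ hα), mul_assoc, ← pow_add,
      Nat.sub_add_cancel h.le]

theorem sum_eval_div_pow_mul_pow_eq_zero {K : Type*} [Field K] [Fintype K] {p : ℕ} [ExpChar K p]
    (f : K[X]) {k a E : ℕ} (hf : f.natDegree < k) (hE : p ^ a < E)
    (hdvd : ∀ d < k, ¬ Fintype.card K - 1 ∣ d * p ^ a + (E - p ^ a)) :
    ∑ α : K, (f.eval α / α) ^ p ^ a * α ^ E = 0 := by
  calc ∑ α : K, (f.eval α / α) ^ p ^ a * α ^ E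
      = ∑ α : K, ∑ d ∈ range k, f.coeff d ^ p ^ a * α ^ (d * p ^ a + (E - p ^ a)) :=
        sum_congr rfl fun α _ => by
          rw [div_pow_mul_pow_of_lt _ _ hE, eval_eq_sum_range' hf, sum_pow_char_pow, sum_mul]
          refine sum_congr rfl fun d _ => ?_
          rw [mul_pow, ← pow_mul, mul_assoc, ← pow_add]
    _ = ∑ d ∈ range k, f.coeff d ^ p ^ a * ∑ α : K, α ^ (d * p ^ a + (E - p ^ a)) := by
        rw [sum_comm]
        simp_rw [mul_sum]
    _ = 0 := sum_eq_zero fun d hd => by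
        rw [FiniteField.sum_pow_eq_zero_of_not_dvd (by omega) (hdvd d (mem_range.mp hd)),
          mul_zero]

theorem sum_sum_frobenius_mul_pow_eq_zero {K : Type*} [Field K] [Fintype K] {p m t k s : ℕ}
    [ExpChar K p] (hcard : Fintype.card K = p ^ (m * t)) (f : K[X]) (hf : f.natDegree < k)
    (hs : 2 ≤ s) (hsk : s * p ^ (m * (t - 1)) + k ≤ p ^ (m * t)) :
    ∑ α : K, (∑ i ∈ range t, (f.eval α / α) ^ p ^ (m * i)) * α ^ (s * p ^ (m * (t - 1))) = 0 := by
  have hp : 0 < p := Nat.pos_of_ne_zero (expChar_ne_zero K p)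
  simp_rw [sum_mul]
  rw [sum_comm]
  refine sum_eq_zero fun i hi => ?_
  have hit : m * i ≤ m * (t - 1) := Nat.mul_le_mul_left m (by have := mem_range.mp hi; omega)
  have hpi : p ^ (m * i) ≤ p ^ (m * (t - 1)) := Nat.pow_le_pow_right hp hit
  have hQ : 0 < p ^ (m * (t - 1)) := Nat.pow_pos hp
  refine sum_eval_div_pow_mul_pow_eq_zero f hf (by nlinarith) fun d hd => ?_
  rw [hcard]
  exact not_pow_sub_one_dvd_mul_pow_add_sub hp hit (Nat.mul_le_mul_left m (Nat.sub_le t 1)) hs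
    (by omega)

theorem stmt_3_general (p m t k : ℕ) (hp : p.Prime) (hk : 1 ≤ k)
    (B F : Type) [Field B] [Field F] [Fintype F] [Algebra B F]
    (hcardF : Fintype.card F = p ^ (m * t))
    (Tr : F → B)
    (hTr : ∀ x : F, algebraMap B F (Tr x) = ∑ i ∈ Finset.range t, x ^ p ^ (m * i))
    (f : Polynomial F)
    (hf : f.degree ≤ ((k - 1 : ℕ) : WithBot ℕ))
    (hnz : ∃ α : F, α ≠ 0 ∧ Tr (f.eval α / α) ≠ 0) :
    (p ^ (m * t) - k) / p ^ (m * (t - 1))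
      ≤ {α : F | α ≠ 0 ∧ Tr (f.eval α / α) ≠ 0}.ncard := by
  classical
  have := Fact.mk hp
  have : CharP F p := charP_of_card_eq_prime_pow hcardF
  set Q := p ^ (m * (t - 1))
  have hQ : 0 < Q := Nat.pow_pos hp.pos
  have hfk : f.natDegree < k := (natDegree_le_iff_degree_le.mpr hf).trans_lt (by omega)
  have hinj : Set.InjOn (· ^ Q) (univ : Finset F) := fun x _ y _ hxy =>
    (iterateFrobenius F p (m * (t - 1))).injective (by simpa [iterateFrobenius_def] using hxy)
  have hmoment : ∀ j < (p ^ (m * t) - k) / Q - 1,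
      ∑ α : F, algebraMap B F (Tr (f.eval α / α)) * α ^ (2 * Q) * (α ^ Q) ^ j = 0 := by
    intro j hj
    have hjQ := (Nat.le_div_iff_mul_le hQ).mp (show j + 2 ≤ (p ^ (m * t) - k) / Q by omega)
    have : 0 < (j + 2) * Q := by positivity
    rw [← sum_sum_frobenius_mul_pow_eq_zero (s := j + 2) hcardF f hfk le_add_self
      (by change (j + 2) * Q + k ≤ _; omega)]
    exact sum_congr rfl fun α _ => by rw [hTr]; ring
  obtain ⟨α₀, hα₀, htr₀⟩ := hnz
  have hsupport := lt_card_filter_ne_zero_of_forall_sum_mul_pow_eq_zero hinj hmoment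
    ⟨α₀, mem_univ _, by simp [hα₀, htr₀]⟩
  rw [show {α : F | α ≠ 0 ∧ Tr (f.eval α / α) ≠ 0} = ↑(univ.filter fun α : F =>
    algebraMap B F (Tr (f.eval α / α)) * α ^ (2 * Q) ≠ 0) by ext; simp [hQ.ne', and_comm],
    Set.ncard_coe_finset]
  omega

/-- Lifted decoding bound: if `k ≤ p^{mt} − p^{m(t−1)}`, every
not-identically-zero repair-trace word `(Tr(f(α)/α))_{α ≠ 0}` has at least
`⌊(p^{mt} − k)/p^{m(t−1)}⌋` nonzero coordinates; hence the minimum distance of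
`T(A,k)` is at least `⌊(p^{mt} − k)/p^{m(t−1)}⌋`. -/
theorem stmt_3 (p m t k : ℕ) (hp : p.Prime) (hm : 1 ≤ m) (ht : 1 ≤ t) (hk : 1 ≤ k)
    (hkbd : k ≤ p ^ (m * t) - p ^ (m * (t - 1)))
    (B F : Type) [Field B] [Field F] [Fintype B] [Fintype F] [Algebra B F]
    (hcardB : Fintype.card B = p ^ m) (hcardF : Fintype.card F = p ^ (m * t))
    (Tr : F → B)
    (hTr : ∀ x : F, algebraMap B F (Tr x) = ∑ i ∈ Finset.range t, x ^ p ^ (m * i))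
    (f : Polynomial F)
    (hf : f.degree ≤ ((k - 1 : ℕ) : WithBot ℕ))
    (hnz : ∃ α : F, α ≠ 0 ∧ Tr (f.eval α / α) ≠ 0) :
    (p ^ (m * t) - k) / p ^ (m * (t - 1))
      ≤ {α : F | α ≠ 0 ∧ Tr (f.eval α / α) ≠ 0}.ncard :=
  stmt_3_general p m t k hp hk B F hcardF Tr hTr f hf hnz
end

section
/- Define Δ = (k−1)·p^{m(t−1)} if k ≥ 2, and Δ = p^{m(t−1)} − 1 if k = 1. For every polynomial f over F of degree at most k−1, the polynomial G(X) = Σ_{i=0}^{t−1} X^{p^{m(t−1)} − p^{mi}} · f(X)^{p^{mi}} over F has degree at most Δ and satisfies, for every α ∈ F∖{0}, G(α) = α^{p^{m(t−1)}} · ι(Tr(f(α)/α)), where ι : B → F is the field inclusion. In particular, the coordinatewise rescaling of the repair-trace codeword of f by α^{p^{m(t−1)}} is the evaluation word of a polynomial of degree at most Δ. -/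
/-- with `Δ = (k−1)·p^{m(t−1)}` if `k ≥ 2` and `Δ = p^{m(t−1)} − 1` if
`k = 1`, for every `f` of degree at most `k − 1`, the polynomial
`G(X) = Σ_{i<t} X^{p^{m(t−1)} − p^{mi}}·f(X)^{p^{mi}}` has degree at most `Δ` and
satisfies `G(α) = α^{p^{m(t−1)}}·ι(Tr(f(α)/α))` for every `α ≠ 0`, where `ι : B → F`
is the field inclusion. -/
theorem stmt_6 (p m t k Δ : ℕ) (hp : p.Prime) (hm : 1 ≤ m) (ht : 1 ≤ t) (hk : 1 ≤ k)
    (hΔ : Δ = if 2 ≤ k then (k - 1) * p ^ (m * (t - 1)) else p ^ (m * (t - 1)) - 1)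
    (B F : Type) [Field B] [Field F] [Fintype B] [Fintype F] [Algebra B F]
    (hcardB : Fintype.card B = p ^ m) (hcardF : Fintype.card F = p ^ (m * t))
    (Tr : F → B)
    (hTr : ∀ x : F, algebraMap B F (Tr x) = ∑ i ∈ Finset.range t, x ^ p ^ (m * i))
    (f : Polynomial F)
    (hf : f.degree ≤ ((k - 1 : ℕ) : WithBot ℕ))
    (G : Polynomial F)
    (hG : G = ∑ i ∈ Finset.range t,
        (Polynomial.X : Polynomial F) ^ (p ^ (m * (t - 1)) - p ^ (m * i)) * f ^ p ^ (m * i)) :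
    G.degree ≤ (Δ : WithBot ℕ) ∧
      ∀ α : F, α ≠ 0 →
        G.eval α = α ^ p ^ (m * (t - 1)) * algebraMap B F (Tr (f.eval α / α)) := by
  subst hG
  have hbP : ∀ i ∈ Finset.range t, p ^ (m * i) ≤ p ^ (m * (t - 1)) := by
    intro i hi
    exact Nat.pow_le_pow_right hp.one_lt.le
      (Nat.mul_le_mul_left m (by have := Finset.mem_range.mp hi; omega))
  constructor
  · refine (Polynomial.degree_sum_le _ _).trans ?_
    rw [Finset.sup_le_iff]
    intro i hi
    set P := p ^ (m * (t - 1)) with hP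
    set b := p ^ (m * i) with hb
    have hbP' : b ≤ P := hbP i hi
    have h1 : ((Polynomial.X : Polynomial F) ^ (P - b) * f ^ b).degree ≤
        ((P - b : ℕ) : WithBot ℕ) + ((b : ℕ) : WithBot ℕ) * (((k - 1 : ℕ)) : WithBot ℕ) :=
      Polynomial.degree_mul_le_of_le (le_of_eq (Polynomial.degree_X_pow _))
        (Polynomial.degree_pow_le_of_le b hf)
    refine h1.trans ?_
    have hcast : ((P - b : ℕ) : WithBot ℕ) + ((b : ℕ) : WithBot ℕ) * (((k - 1 : ℕ)) : WithBot ℕ)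
        = ((P - b + b * (k - 1) : ℕ) : WithBot ℕ) := by push_cast; ring
    rw [hcast, Nat.cast_le]
    have hbpos : 1 ≤ b := Nat.one_le_pow _ _ hp.pos
    rcases le_or_gt 2 k with h2 | h2
    · have hk1 : k - 1 = (k - 2) + 1 := by omega
      have hmul : b * (k - 2) ≤ P * (k - 2) := Nat.mul_le_mul_right _ hbP'
      have : P - b + b * (k - 1) = P + b * (k - 2) := by
        rw [hk1, Nat.mul_add, Nat.mul_one]; omega
      rw [this, hΔ, if_pos h2]
      have : (k - 1) * P = P + P * (k - 2) := by
        rw [hk1]; ring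
      omega
    · have hk1 : k = 1 := by omega
      rw [hΔ, if_neg (by omega)]
      subst hk1
      simp only [Nat.sub_self, Nat.mul_zero, Nat.add_zero]
      omega
  · intro α hα
    rw [Polynomial.eval_finset_sum, hTr, Finset.mul_sum]
    refine Finset.sum_congr rfl fun i hi => ?_
    rw [Polynomial.eval_mul, Polynomial.eval_pow, Polynomial.eval_pow, Polynomial.eval_X,
      div_pow, pow_sub₀ α hα (hbP i hi)]
    field_simp
end

section
/- Let f be a polynomial over F of degree at most k−1. Then for every integer ℓ with 2 ≤ ℓ ≤ ⌊(p^{mt} − k)/p^{m(t−1)}⌋, the following identity holds in F: Σ_{α∈F∖{0}} α^ℓ · ι(Tr(f(α)/α)) = 0, where ι : B → F is the field inclusion. -/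
/-!
Since `α⁻¹ = α ^ (q - 2)` on `Fˣ` (`q = p ^ (m t)`) and `x ↦ x ^ p ^ (m i)` is additive, the sum
expands into the power sums `∑_{α ≠ 0} α ^ n` with `n = ℓ + (j + q - 2) p ^ (m i)`, `j < k`,
`i < t`, weighted by the coefficients of `f`. Such a power sum vanishes unless `q - 1 ∣ n`. Modulo
`q - 1` one has `n ≡ ℓ + j - 1` when `i = 0`, and `p ^ (m (t - i)) n ≡ ℓ p ^ (m (t - i)) + j - 1`
when `i > 0`; the bound on `ℓ` puts both residues strictly between `0` and `q - 1`.
-/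

open Finset Polynomial

theorem not_sub_one_dvd_add_mul {q s j b : ℕ} (hb : b = 1 ∨ b = q) (hs : 2 ≤ s)
    (hsj : s + j + 1 ≤ q) : ¬ (q - 1) ∣ s + (j + (q - 2)) * b := by
  obtain ⟨q, rfl⟩ : ∃ q', q = q' + 2 := ⟨q - 2, by omega⟩
  obtain ⟨s, rfl⟩ : ∃ s', s = s' + 1 := ⟨s - 1, by omega⟩
  have hrem : ∃ c, s + 1 + (j + q) * b = s + j + c * (q + 1) := by
    rcases hb with rfl | rfl
    · exact ⟨1, by ring⟩
    · exact ⟨j + q + 1, by ring⟩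
  obtain ⟨c, hc⟩ := hrem
  rw [show q + 2 - 1 = q + 1 by omega, show q + 2 - 2 = q by omega, hc,
    Nat.dvd_add_left (dvd_mul_left _ c)]
  exact Nat.not_dvd_of_pos_of_lt (by omega) (by omega)

theorem not_pow_sub_one_dvd {a t k ℓ i j : ℕ} (ha : 0 < a) (hℓ : 2 ≤ ℓ)
    (hℓk : ℓ * a ^ (t - 1) ≤ a ^ t - k) (hi : i < t) (hj : j < k) :
    ¬ (a ^ t - 1) ∣ ℓ + (j + (a ^ t - 2)) * a ^ i := by
  have hpos : ∀ n, 1 ≤ a ^ n := fun n => Nat.one_le_pow _ _ ha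
  rcases Nat.eq_zero_or_pos i with rfl | hi0
  · have := Nat.le_mul_of_pos_right ℓ (hpos (t - 1))
    rw [pow_zero]
    exact not_sub_one_dvd_add_mul (.inl rfl) hℓ (by omega)
  · intro hdvd
    have hsplit : a ^ i * a ^ (t - i) = a ^ t := by rw [← pow_add]; congr 1; omega
    have hmono := Nat.mul_le_mul_left ℓ (Nat.pow_le_pow_right ha (by omega : t - i ≤ t - 1))
    have hs := Nat.mul_le_mul hℓ (hpos (t - i))
    refine not_sub_one_dvd_add_mul (q := a ^ t) (s := ℓ * a ^ (t - i)) (j := j) (.inr rfl)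
      (by omega) (by omega) ?_
    have := hdvd.mul_right (a ^ (t - i))
    rwa [add_mul, mul_assoc, hsplit] at this

section FiniteField

variable {K : Type*} [Field K] [Fintype K]

theorem sum_nonzero_pow_eq_zero_of_not_dvd [DecidableEq K] {n : ℕ}
    (hn : ¬ (Fintype.card K - 1) ∣ n) : ∑ α ∈ univ \ {0}, (α : K) ^ n = 0 := by
  have hunits : (univ : Finset Kˣ).map ⟨Units.val, Units.val_injective⟩ = univ \ {0} := by
    ext α
    simp only [mem_map, mem_univ, true_and, mem_sdiff, mem_singleton]
    exact isUnit_iff_ne_zero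
  simpa [← hunits, hn] using FiniteField.sum_pow_units K n

theorem inv_eq_pow_card_sub_two {α : K} (hα : α ≠ 0) : α⁻¹ = α ^ (Fintype.card K - 2) := by
  refine inv_eq_of_mul_eq_one_right ?_
  rw [← pow_succ', ← FiniteField.pow_card_sub_one_eq_one α hα]
  congr 1
  have := Fintype.one_lt_card (α := K)
  omega

variable {p : ℕ} [ExpChar K p] {f : K[X]} {k : ℕ}

theorem pow_mul_eval_div_pow_expChar_pow (hf : f.natDegree < k) {α : K} (hα : α ≠ 0)
    (ℓ e : ℕ) : α ^ ℓ * (f.eval α / α) ^ p ^ e =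
      ∑ j ∈ range k, f.coeff j ^ p ^ e * α ^ (ℓ + (j + (Fintype.card K - 2)) * p ^ e) := by
  rw [div_eq_mul_inv, inv_eq_pow_card_sub_two hα, eval_eq_sum_range' hf, sum_mul,
    sum_pow_char_pow, mul_sum]
  refine sum_congr rfl fun j _ => ?_
  rw [mul_pow, mul_pow, ← pow_mul, ← pow_mul, add_mul, pow_add]
  ring

theorem sum_pow_mul_eval_div_pow_expChar_pow_eq_zero [DecidableEq K] (hf : f.natDegree < k)
    {ℓ e : ℕ} (hdvd : ∀ j < k, ¬ (Fintype.card K - 1) ∣ ℓ + (j + (Fintype.card K - 2)) * p ^ e) :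
    ∑ α ∈ univ \ {0}, α ^ ℓ * (f.eval α / α) ^ p ^ e = 0 := by
  rw [sum_congr rfl fun α hα =>
    pow_mul_eval_div_pow_expChar_pow hf (by simpa using hα) ℓ e, sum_comm]
  refine sum_eq_zero fun j hj => ?_
  rw [← mul_sum, sum_nonzero_pow_eq_zero_of_not_dvd (hdvd j (mem_range.mp hj)), mul_zero]

end FiniteField

theorem stmt_7_general (p m t k : ℕ) (hp : p.Prime) (hk : 1 ≤ k)
    (B F : Type) [Field B] [Field F] [Fintype F] [Algebra B F]
    [DecidableEq F]
    (hcardF : Fintype.card F = p ^ (m * t))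
    (Tr : F → B)
    (hTr : ∀ x : F, algebraMap B F (Tr x) = ∑ i ∈ Finset.range t, x ^ p ^ (m * i))
    (f : Polynomial F)
    (hf : f.degree ≤ ((k - 1 : ℕ) : WithBot ℕ)) :
    ∀ ℓ : ℕ, 2 ≤ ℓ → ℓ ≤ (p ^ (m * t) - k) / p ^ (m * (t - 1)) →
      ∑ α ∈ Finset.univ \ {0}, α ^ ℓ * algebraMap B F (Tr (f.eval α / α)) = 0 := by
  intro ℓ hℓ hℓk
  have : Fact p.Prime := ⟨hp⟩
  have : CharP F p := by
    refine (CharP.charP_iff_prime_eq_zero hp).2 (IsReduced.eq_zero _ ⟨m * t, ?_⟩)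
    exact_mod_cast hcardF ▸ FiniteField.cast_card_eq_zero F
  have hdeg : f.natDegree < k := by
    have := natDegree_le_iff_degree_le.mpr hf
    omega
  simp_rw [hTr, mul_sum]
  rw [sum_comm]
  refine sum_eq_zero fun i hi => sum_pow_mul_eval_div_pow_expChar_pow_eq_zero hdeg fun j hj => ?_
  rw [hcardF, pow_mul, pow_mul]
  exact not_pow_sub_one_dvd (pow_pos hp.pos m) hℓ
    ((Nat.le_div_iff_mul_le (pow_pos (pow_pos hp.pos m) _)).mp (by rwa [← pow_mul, ← pow_mul]))
    (mem_range.mp hi) hj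

/-- for `f` of degree at most `k − 1` and every integer `ℓ` with
`2 ≤ ℓ ≤ ⌊(p^{mt} − k)/p^{m(t−1)}⌋`, one has `Σ_{α ≠ 0} α^ℓ·ι(Tr(f(α)/α)) = 0` in `F`,
where `ι : B → F` is the field inclusion. -/
theorem stmt_7 (p m t k : ℕ) (hp : p.Prime) (hm : 1 ≤ m) (ht : 1 ≤ t) (hk : 1 ≤ k)
    (B F : Type) [Field B] [Field F] [Fintype B] [Fintype F] [Algebra B F]
    [DecidableEq F]
    (hcardB : Fintype.card B = p ^ m) (hcardF : Fintype.card F = p ^ (m * t))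
    (Tr : F → B)
    (hTr : ∀ x : F, algebraMap B F (Tr x) = ∑ i ∈ Finset.range t, x ^ p ^ (m * i))
    (f : Polynomial F)
    (hf : f.degree ≤ ((k - 1 : ℕ) : WithBot ℕ)) :
    ∀ ℓ : ℕ, 2 ≤ ℓ → ℓ ≤ (p ^ (m * t) - k) / p ^ (m * (t - 1)) →
      ∑ α ∈ Finset.univ \ {0}, α ^ ℓ * algebraMap B F (Tr (f.eval α / α)) = 0 :=
  stmt_7_general p m t k hp hk B F hcardF Tr hTr f hf
end
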